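/- Let Φ_n, Φ_{n−1} be polynomials of degrees n, n−1, ρ a polynomial, and suppose ρΦ_n' = (A_n x + B_n)Φ_n + C_n Φ_{n−1} and ρΦ_{n−1}' = (D_n x + E_n)Φ_{n−1} + F_n Φ_n for constants A_n,…,F_n with D_n ≠ A_n. Let Φ_{n;c} = Φ_n + cΦ_{n−1} for c ≠ 0 and l_n the leading coefficient of Φ_n. Then disc(Φ_{n;c}) = (−1)^{n(n+1)/2} (D_n − A_n)^n c^n / (l_n^{2−deg ρ} Res(Φ_{n;c}, ρ)) · Res(Φ_n, Φ_{n−1}) · Φ_{n;c}(ξ), where ξ = (F_n c² + (B_n − E_n)c − C_n)/((D_n − A_n)c), provided Res(Φ_{n;c}, ρ) ≠ 0. -/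

import Mathlib

open Polynomial

/-- The resultant: `Res f g = lc(f)^(deg g) * ∏_{α root of f} g(α)`. -/
noncomputable def Res (f g : Polynomial ℂ) : ℂ :=
  f.leadingCoeff ^ g.natDegree * (f.roots.map (fun a => g.eval a)).prod

/-- The discriminant of a polynomial. -/
noncomputable def disc (f : Polynomial ℂ) : ℂ :=
  (-1) ^ (f.natDegree * (f.natDegree - 1) / 2) / f.leadingCoeff * Res f (derivative f)

/-!
At a root `α` of `Φ = Φₙ + c Φₙ₋₁` the two differential relations combine to
`ρ(α) Φ'(α) = (A - D) c Φₙ₋₁(α) (ξ - α)`. Taking the product over all roots turns the left side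
into `Res(Φ, ρ) Res(Φ, Φ')` and the right side into `Res(Φ, Φₙ₋₁) Φ(ξ)` up to powers of the
leading coefficient, and `Res(Φ, Φₙ₋₁) = Res(Φₙ, Φₙ₋₁)` because `Φ ≡ Φₙ` modulo `Φₙ₋₁`.
-/

theorem Res_eq_resultant (f g : ℂ[X]) : Res f g = resultant f g :=
  (resultant_eq_prod_eval f g _ le_rfl (IsAlgClosed.splits f)).symm

theorem Res_add_C_mul_left {f g : ℂ[X]} (hgf : g.natDegree < f.natDegree) (c : ℂ) :
    Res (f + C c * g) g = Res f g := by
  have hdeg : (f + C c * g).natDegree = f.natDegree :=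
    natDegree_add_eq_left_of_natDegree_lt (natDegree_C_mul_le c g |>.trans_lt hgf)
  rw [Res_eq_resultant, Res_eq_resultant, hdeg, mul_comm (C c), resultant_add_mul_left]
  · rw [natDegree_C]; omega
  · rfl

theorem leadingCoeff_pow_mul_Res_mul_Res {f g h k : ℂ[X]} {a ξ : ℂ}
    (H : ∀ α ∈ f.roots, g.eval α * h.eval α = a * k.eval α * (ξ - α)) :
    f.leadingCoeff ^ (k.natDegree + 1) * (Res f g * Res f h) =
      f.leadingCoeff ^ (g.natDegree + h.natDegree) * a ^ f.natDegree * Res f k * f.eval ξ := by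
  have hprod : (f.roots.map fun α => g.eval α * h.eval α).prod =
      a ^ f.natDegree * (f.roots.map k.eval).prod * (f.roots.map (ξ - ·)).prod := by
    rw [Multiset.map_congr rfl H, Multiset.prod_map_mul, Multiset.prod_map_mul,
      Multiset.map_const', Multiset.prod_replicate, ← (IsAlgClosed.splits f).natDegree_eq_card_roots]
  rw [Res, Res, Res, (IsAlgClosed.splits f).eval_eq_prod_roots ξ, mul_mul_mul_comm,
    ← Multiset.prod_map_mul, hprod]
  ring

theorem eval_mul_eval_derivative_of_isRoot {K : Type*} [Field K] {p q ρ : K[X]}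
    {A B Cn D E F c ξ α : K}
    (hder1 : ρ * derivative p = (C A * X + C B) * p + C Cn * q)
    (hder2 : ρ * derivative q = (C D * X + C E) * q + C F * p)
    (hξ : (D - A) * c * ξ = F * c ^ 2 + (B - E) * c - Cn) (hα : (p + C c * q).IsRoot α) :
    ρ.eval α * (derivative (p + C c * q)).eval α = (A - D) * c * q.eval α * (ξ - α) := by
  have hroot : p.eval α + c * q.eval α = 0 := by simpa using hα
  have e1 := congrArg (eval α) hder1
  have e2 := congrArg (eval α) hder2
  simp only [eval_mul, eval_add, eval_C, eval_X] at e1 e2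
  simp only [derivative_add, derivative_C_mul, eval_add, eval_mul, eval_C]
  linear_combination e1 + c * e2 + (A * α + B + c * F) * hroot + q.eval α * hξ

theorem stmt_11 (n : ℕ) (hn : 1 ≤ n) (Φn Φn1 ρ : Polynomial ℂ)
    (hΦn : Φn.natDegree = n) (hΦn1 : Φn1.natDegree = n - 1)
    (A B Cn D E F : ℂ) (hDA : D ≠ A)
    (hder1 : ρ * derivative Φn = (C A * X + C B) * Φn + C Cn * Φn1)
    (hder2 : ρ * derivative Φn1 = (C D * X + C E) * Φn1 + C F * Φn)
    (c : ℂ) (hc : c ≠ 0)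
    (hres : Res (Φn + C c * Φn1) ρ ≠ 0) :
    disc (Φn + C c * Φn1) =
      (-1) ^ (n * (n + 1) / 2) * (D - A) ^ n * c ^ n /
          (Φn.leadingCoeff ^ ((2 : ℤ) - ρ.natDegree) * Res (Φn + C c * Φn1) ρ) *
        Res Φn Φn1 *
        (Φn + C c * Φn1).eval ((F * c ^ 2 + (B - E) * c - Cn) / ((D - A) * c)) := by
  set Φ := Φn + C c * Φn1
  set ξ := (F * c ^ 2 + (B - E) * c - Cn) / ((D - A) * c)
  have hlt : (C c * Φn1).natDegree < Φn.natDegree :=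
    (natDegree_C_mul_le c Φn1).trans_lt (by omega)
  have hΦ : Φ.natDegree = n := (natDegree_add_eq_left_of_natDegree_lt hlt).trans hΦn
  have hl : Φn.leadingCoeff ≠ 0 := by
    rw [Ne, leadingCoeff_eq_zero]; rintro rfl; simp at hΦn; omega
  have hlΦ : Φ.leadingCoeff = Φn.leadingCoeff :=
    leadingCoeff_add_of_degree_lt' (degree_lt_degree hlt)
  have hξ : (D - A) * c * ξ = F * c ^ 2 + (B - E) * c - Cn :=
    mul_div_cancel₀ _ (mul_ne_zero (sub_ne_zero.mpr hDA) hc)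
  have hprodRes := leadingCoeff_pow_mul_Res_mul_Res (f := Φ) fun α hα =>
    eval_mul_eval_derivative_of_isRoot hder1 hder2 hξ (isRoot_of_mem_roots hα)
  rw [hlΦ, hΦ, natDegree_derivative, hΦ, hΦn1, Res_add_C_mul_left (by omega)] at hprodRes
  have hsign : n * (n + 1) / 2 = n * (n - 1) / 2 + n := by
    rw [← Nat.triangle_succ, Nat.add_sub_cancel, mul_comm]
  rw [disc, hΦ, hlΦ, hsign, pow_add, zpow_sub₀ hl, zpow_natCast]
  field_simp
  obtain ⟨m, rfl⟩ : ∃ m, n = m + 1 := ⟨n - 1, by omega⟩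
  have hneg : ((A - D) * c) ^ (m + 1) = (-1) ^ (m + 1) * (D - A) ^ (m + 1) * c ^ (m + 1) := by
    rw [← mul_pow, ← mul_pow]; ring_nf
  rw [Nat.add_sub_cancel, pow_add, pow_add, hneg] at hprodRes
  apply mul_left_cancel₀ (pow_ne_zero m hl)
  linear_combination hprodRes
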